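/- Let v_1,...,v_N ∈ ℂ^d and let G = cob{v_1, v̄_1, ..., v_N, v̄_N} be the self-conjugate balanced complex polytope, and P = co{E(v_1),...,E(v_N)} ⊂ ℝ^d. If v_0 = a_0 + i b_0 ∉ G, then the ellipse E(v_0) is not contained in (1/2)P. -/

import Mathlib

open Pointwise

noncomputable def ellipse {d : ℕ} (a b : EuclideanSpace ℝ (Fin d)) :
    Set (EuclideanSpace ℝ (Fin d)) :=
  {x | ∃ t : ℝ, x = Real.cos t • a + Real.sin t • b}

noncomputable def rePart {d : ℕ} (v : Fin d → ℂ) : EuclideanSpace ℝ (Fin d) :=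
  WithLp.toLp 2 (fun i => (v i).re)

noncomputable def imPart {d : ℕ} (v : Fin d → ℂ) : EuclideanSpace ℝ (Fin d) :=
  WithLp.toLp 2 (fun i => (v i).im)

/-!
The balanced convex hull `G` of the `v_k, v̄_k` is convex and stable under multiplication by `i`,
and it contains every real point `cos s • a + sin s • b = (e^{-is} v + e^{is} v̄) / 2` of each
ellipse `E(v_k)`, hence all of `P`. If `E(v₀) ⊆ P / 2`, then the points `t = 0` and `t = π / 2`
of `E(v₀)` give `2 a₀ ∈ G` and `2 b₀ ∈ G`, so `v₀ = (2 a₀ + i (2 b₀)) / 2 ∈ G`.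
-/

open ComplexConjugate

section BalancedConvexHull

variable {ι E : Type*} [Fintype ι] [AddCommMonoid E] [Module ℂ E]

def cob (u : ι → E) : Set E :=
  {x | ∃ z : ι → ℂ, ∑ k, ‖z k‖ ≤ 1 ∧ x = ∑ k, z k • u k}

variable {u : ι → E}

theorem mem_cob_self [DecidableEq ι] (i : ι) : u i ∈ cob u :=
  ⟨Pi.single i 1, by simp [Pi.single_apply, apply_ite], by simp [Pi.single_apply, ite_smul]⟩

theorem smul_add_smul_mem_cob {x y : E} (hx : x ∈ cob u) (hy : y ∈ cob u) {a b : ℂ}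
    (hab : ‖a‖ + ‖b‖ ≤ 1) : a • x + b • y ∈ cob u := by
  obtain ⟨z, hz, rfl⟩ := hx
  obtain ⟨w, hw, rfl⟩ := hy
  refine ⟨fun k => a * z k + b * w k, ?_, ?_⟩
  · calc ∑ k, ‖a * z k + b * w k‖
        ≤ ∑ k, (‖a‖ * ‖z k‖ + ‖b‖ * ‖w k‖) :=
          Finset.sum_le_sum fun k _ => (norm_add_le _ _).trans_eq (by rw [norm_mul, norm_mul])
      _ = ‖a‖ * ∑ k, ‖z k‖ + ‖b‖ * ∑ k, ‖w k‖ := by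
          rw [Finset.sum_add_distrib, Finset.mul_sum, Finset.mul_sum]
      _ ≤ ‖a‖ * 1 + ‖b‖ * 1 := by gcongr
      _ ≤ 1 := by linarith
  · simp only [Finset.smul_sum, add_smul, mul_smul, Finset.sum_add_distrib]

theorem convex_cob [Module ℝ E] [IsScalarTower ℝ ℂ E] : Convex ℝ (cob u) := by
  intro x hx y hy α β hα hβ hαβ
  rw [← algebraMap_smul ℂ α x, ← algebraMap_smul ℂ β y]
  refine smul_add_smul_mem_cob hx hy ?_
  simp [abs_of_nonneg hα, abs_of_nonneg hβ, hαβ]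

theorem mem_cob_sum_elim {κ : Type*} [Fintype κ] {u' : κ → E} {x : E} :
    x ∈ cob (Sum.elim u u') ↔ ∃ z : ι → ℂ, ∃ w : κ → ℂ,
      (∑ k, ‖z k‖) + (∑ k, ‖w k‖) ≤ 1 ∧ x = (∑ k, z k • u k) + ∑ k, w k • u' k := by
  constructor
  · rintro ⟨z, hz, rfl⟩
    exact ⟨z ∘ Sum.inl, z ∘ Sum.inr, by simpa [Fintype.sum_sum_type] using hz,
      by simp [Fintype.sum_sum_type]⟩
  · rintro ⟨z, w, hzw, rfl⟩
    exact ⟨Sum.elim z w, by simpa [Fintype.sum_sum_type] using hzw,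
      by simp [Fintype.sum_sum_type]⟩

end BalancedConvexHull

def complexify {ι : Type*} : EuclideanSpace ℝ ι →ₗ[ℝ] (ι → ℂ) where
  toFun p i := p i
  map_add' _ _ := by ext; simp
  map_smul' _ _ := by ext; simp

section Ellipse

variable {d : ℕ}

theorem left_mem_ellipse (a b : EuclideanSpace ℝ (Fin d)) : a ∈ ellipse a b :=
  ⟨0, by simp⟩

theorem right_mem_ellipse (a b : EuclideanSpace ℝ (Fin d)) : b ∈ ellipse a b :=
  ⟨Real.pi / 2, by simp⟩

theorem complexify_rePart_add_I_smul_imPart (w : Fin d → ℂ) :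
    complexify (rePart w) + Complex.I • complexify (imPart w) = w := by
  ext i
  simpa [complexify, rePart, imPart, mul_comm] using Complex.re_add_im (w i)

theorem complexify_cos_smul_add_sin_smul (w : Fin d → ℂ) (s : ℝ) :
    complexify (Real.cos s • rePart w + Real.sin s • imPart w)
      = (Complex.exp (-(s * Complex.I)) / 2) • w
        + (Complex.exp (s * Complex.I) / 2) • fun i => conj (w i) := by
  ext i
  apply Complex.ext <;> simp [complexify, rePart, imPart, Complex.exp_re, Complex.exp_im, Complex.cos_ofReal_re,
    Complex.sin_ofReal_re] <;> ring

theorem ellipse_subset_preimage_cob {ι : Type*} [Fintype ι] [DecidableEq ι]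
    {u : ι → (Fin d → ℂ)} {w : Fin d → ℂ} {i j : ι} (hi : u i = w)
    (hj : u j = fun k => conj (w k)) :
    ellipse (rePart w) (imPart w) ⊆ complexify ⁻¹' cob u := by
  rintro _ ⟨s, rfl⟩
  subst hi
  rw [Set.mem_preimage, complexify_cos_smul_add_sin_smul, ← hj]
  refine smul_add_smul_mem_cob (mem_cob_self i) (mem_cob_self j) ?_
  simp only [norm_div, Complex.norm_exp_ofReal_mul_I, ← neg_mul, ← Complex.ofReal_neg]
  norm_num

end Ellipse

/-- If `v_0` is not in the self-conjugate balanced complex polytope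
`G = cob{v_1, v̄_1, …, v_N, v̄_N}`, then `E(v_0)` is not contained in `(1/2)P`,
where `P = co{E(v_1),…,E(v_N)}`. -/
theorem not_subset_half_of_not_mem_cob {d N : ℕ}
    (v : Fin N → (Fin d → ℂ)) (v0 : Fin d → ℂ)
    (hv0 : ¬ ∃ z w : Fin N → ℂ,
        (∑ k, ‖z k‖) + (∑ k, ‖w k‖) ≤ 1 ∧
        v0 = (∑ k, z k • v k)
              + ∑ k, w k • (fun i => (starRingEnd ℂ) (v k i))) :
    ¬ (ellipse (rePart v0) (imPart v0) ⊆
        (2⁻¹ : ℝ) • convexHull ℝ (⋃ k, ellipse (rePart (v k)) (imPart (v k)))) := by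
  intro hsub
  set u := Sum.elim v fun k i => conj (v k i)
  have hPG : convexHull ℝ (⋃ k, ellipse (rePart (v k)) (imPart (v k))) ⊆ complexify ⁻¹' cob u :=
    convexHull_min
      (Set.iUnion_subset fun k => ellipse_subset_preimage_cob (i := .inl k) (j := .inr k) rfl rfl)
      (convex_cob.linear_preimage complexify)
  have hmem {x} (hx : x ∈ ellipse (rePart v0) (imPart v0)) : complexify ((2 : ℝ) • x) ∈ cob u := by
    refine hPG ?_
    simpa using (Set.mem_smul_set_iff_inv_smul_mem₀ (by norm_num) _ _).mp (hsub hx)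
  have hv0G : (2⁻¹ : ℂ) • complexify ((2 : ℝ) • rePart v0)
      + (2⁻¹ * Complex.I) • complexify ((2 : ℝ) • imPart v0) ∈ cob u :=
    smul_add_smul_mem_cob (hmem (left_mem_ellipse _ _)) (hmem (right_mem_ellipse _ _))
      (by norm_num)
  refine hv0 (mem_cob_sum_elim.mp ?_)
  convert hv0G using 1
  conv_lhs => rw [← complexify_rePart_add_I_smul_imPart v0]
  rw [map_smul, map_smul]
  module
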